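/- Let n ≥ 1, A ∈ ℂ^{n×n}, and r ≥ 0 a real number. Suppose there exists a unit vector x₀ ∈ ℂⁿ with ‖A x₀‖ > r (strict feasibility), and suppose every z ∈ W_{≥r}(A) satisfies Re z > 0. Let A_h := (A + A*)/2 and A_s := (A − A*)/(2i). Then the set S := { h ∈ ℝ : there exists τ ≥ 0 such that A_s − h·A_h + τ·(A*A − r²·I) ⪯ 0 } is nonempty, and inf S = sup{ Im z / Re z : z ∈ W_{≥r}(A) }; moreover this infimum is attained (the supremum itself belongs to S). Equivalently, tan ψ̄_r(A) is the optimal value of the semidefinite program minimizing h subject to A_s − h·A_h + τ·(A*A − r²·I) ⪯ 0, τ ≥ 0. -/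

import Mathlib

/-!
Weak duality is immediate: if `-(A_s - h A_h + τ (A*A - r²))` is positive semidefinite with
`τ ≥ 0`, then every unit `x` with `‖A x‖ ≥ r` satisfies `Im ⟪x, A x⟫ ≤ h Re ⟪x, A x⟫`.
Conversely, if `Im z ≤ h Re z` on the shell, the Hermitian forms
`f = Im ⟪x, A x⟫ - h Re ⟪x, A x⟫` and `g = ‖A x‖² - r² ‖x‖²` satisfy `g > 0 → f ≤ 0` on the
sphere. Their joint range `{f x + i g x}` is the numerical range of an operator, hence convex
(Toeplitz–Hausdorff), so Hahn–Banach separates it from the open first quadrant; strict feasibility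
makes the coefficient of `f` nonzero, which yields the multiplier `τ` (the S-lemma).
So the feasible set of the SDP is exactly the set of upper bounds of the ratios `Im z / Re z`
over the shell, which is nonempty and compact because `Re > 0` on the compact shell.
-/

open scoped ComplexOrder Matrix

noncomputable section

/-- The vertically projected Davis–Wielandt shell `W_{≥r}(A)`. -/
def wShell {n : ℕ} (A : Matrix (Fin n) (Fin n) ℂ) (r : ℝ) : Set ℂ :=
  { z | ∃ x : EuclideanSpace ℂ (Fin n), ‖x‖ = 1 ∧ r ≤ ‖Matrix.toEuclideanLin A x‖ ∧
      z = (inner ℂ x (Matrix.toEuclideanLin A x) : ℂ) }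

open scoped InnerProductSpace ComplexConjugate

theorem Complex.exists_ne_zero_im_conj_mul_add_mul_eq_zero (a b : ℂ) :
    ∃ μ : ℂ, μ ≠ 0 ∧ (conj μ * a + μ * b).im = 0 := by
  by_cases h : a = conj b
  · exact ⟨1, one_ne_zero, by simp [h]⟩
  · refine ⟨a - conj b, sub_ne_zero.mpr h, ?_⟩
    simp only [Complex.add_im, Complex.mul_im, map_sub, Complex.conj_conj, Complex.sub_re,
      Complex.sub_im, Complex.conj_re, Complex.conj_im]
    ring

theorem nonpos_of_forall_pos_mul_lt {c d : ℝ} (h : ∀ t : ℝ, 0 < t → c * t < d) : c ≤ 0 := by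
  by_contra! hc
  have := h ((|d| + 1) / c) (by positivity)
  rw [mul_div_cancel₀ _ hc.ne'] at this
  linarith [le_abs_self d]

theorem nonneg_of_forall_pos_mul_lt {c d : ℝ} (h : ∀ t : ℝ, 0 < t → c * t < d) : 0 ≤ d := by
  by_contra! hd
  rcases le_or_gt 0 c with hc | hc
  · linarith [h 1 one_pos]
  · have := h (d / c) (div_pos_of_neg_of_neg hd hc)
    rw [mul_div_cancel₀ _ hc.ne] at this
    exact lt_irrefl _ this

theorem ContinuousLinearMap.apply_eq_re_mul_add_im_mul (φ : ℂ →L[ℝ] ℝ) (z : ℂ) :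
    φ z = z.re * φ 1 + z.im * φ Complex.I := by
  conv_lhs => rw [← Complex.re_add_im z, ← mul_one (z.re : ℂ), ← Complex.real_smul,
    ← Complex.real_smul]
  rw [map_add, map_smul, map_smul, smul_eq_mul, smul_eq_mul]

theorem Convex.exists_nonneg_forall_re_add_mul_im_nonpos {V : Set ℂ} (hV : Convex ℝ V)
    (hVQ : ∀ w ∈ V, 0 < w.im → w.re ≤ 0) {w₀ : ℂ} (hw₀ : w₀ ∈ V) (hw₀im : 0 < w₀.im) :
    ∃ τ : ℝ, 0 ≤ τ ∧ ∀ w ∈ V, w.re + τ * w.im ≤ 0 := by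
  let Q : Set ℂ := {z | 0 < z.re ∧ 0 < z.im}
  have hQ : Convex ℝ Q := (convex_halfSpace_re_gt 0).inter (convex_halfSpace_im_gt 0)
  have hQo : IsOpen Q := (isOpen_lt continuous_const Complex.continuous_re).inter
    (isOpen_lt continuous_const Complex.continuous_im)
  have hQV : Disjoint Q V := Set.disjoint_left.2 fun z hz hzV => (hVQ z hzV hz.2).not_gt hz.1
  obtain ⟨φ, u, hφQ, hφV⟩ := geometric_hahn_banach_open hQ hQo hV hQV
  have hφ := φ.apply_eq_re_mul_add_im_mul
  have hφQ' : ∀ a b : ℝ, 0 < a → 0 < b → a * φ 1 + b * φ Complex.I < u := fun a b ha hb => by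
    have := hφQ (a + b * Complex.I) ⟨by simpa, by simpa⟩
    rw [hφ] at this
    simpa using this
  -- `Q` is a cone, so `φ ≤ 0` on it and `u ≥ 0`
  have h1 : φ 1 ≤ 0 := nonpos_of_forall_pos_mul_lt (d := u - φ Complex.I) fun t ht => by
    linarith [hφQ' t 1 ht one_pos]
  have hI : φ Complex.I ≤ 0 := nonpos_of_forall_pos_mul_lt (d := u - φ 1) fun t ht => by
    linarith [hφQ' 1 t one_pos ht]
  have hu : 0 ≤ u := nonneg_of_forall_pos_mul_lt (c := φ 1 + φ Complex.I) fun t ht => by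
    linarith [hφQ' t t ht ht]
  have h1' : φ 1 < 0 := by
    refine h1.lt_of_ne fun h10 => ?_
    have hu₀ := hφV w₀ hw₀
    rw [hφ, h10, mul_zero, zero_add] at hu₀
    have hI' : φ Complex.I < 0 := by
      linarith [hφQ' 1 1 one_pos one_pos, mul_nonpos_of_nonneg_of_nonpos hw₀im.le hI]
    linarith [mul_neg_of_pos_of_neg hw₀im hI']
  refine ⟨φ Complex.I / φ 1, div_nonneg_of_nonpos hI h1, fun w hw => ?_⟩
  have hφw := hφV w hw
  rw [hφ] at hφw
  have hmul : (w.re + φ Complex.I / φ 1 * w.im) * φ 1 = w.re * φ 1 + w.im * φ Complex.I := by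
    have := h1'.ne
    field_simp
  nlinarith

namespace LinearMap

variable {E : Type*} [NormedAddCommGroup E] [InnerProductSpace ℂ E]

def numericalRange (T : E →ₗ[ℂ] E) : Set ℂ :=
  {z | ∃ x : E, ‖x‖ = 1 ∧ ⟪x, T x⟫_ℂ = z}

theorem inner_smul_map_smul (T : E →ₗ[ℂ] E) (c : ℂ) (x : E) :
    ⟪c • x, T (c • x)⟫_ℂ = (Complex.normSq c : ℂ) * ⟪x, T x⟫_ℂ := by
  rw [map_smul, inner_smul_left, inner_smul_right, Complex.normSq_eq_conj_mul_self, mul_assoc]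

theorem exists_norm_eq_one_inner_map_self_eq (T : E →ₗ[ℂ] E) {x : E} (hx : x ≠ 0) :
    ∃ u : E, ‖u‖ = 1 ∧ ⟪x, T x⟫_ℂ = (‖x‖ ^ 2 : ℝ) * ⟪u, T u⟫_ℂ := by
  have hx' : ‖x‖ ≠ 0 := norm_ne_zero_iff.mpr hx
  refine ⟨((‖x‖⁻¹ : ℝ) : ℂ) • x, ?_, ?_⟩
  · rw [norm_smul, Complex.norm_real, Real.norm_eq_abs, abs_inv, abs_norm, inv_mul_cancel₀ hx']
  · rw [inner_smul_map_smul, Complex.normSq_ofReal, ← mul_assoc, ← Complex.ofReal_mul]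
    field_simp
    simp

theorem numericalRange_smul_add_smul_id (T : E →ₗ[ℂ] E) (a b : ℂ) :
    numericalRange (a • T + b • LinearMap.id) = (fun w => a * w + b) '' numericalRange T := by
  have key : ∀ x : E, ‖x‖ = 1 →
      ⟪x, (a • T + b • LinearMap.id : E →ₗ[ℂ] E) x⟫_ℂ = a * ⟪x, T x⟫_ℂ + b := by
    intro x hx
    simp [inner_self_eq_norm_sq_to_K, hx]
  ext z
  constructor
  · rintro ⟨x, hx, rfl⟩
    exact ⟨_, ⟨x, hx, rfl⟩, (key x hx).symm⟩
  · rintro ⟨_, ⟨x, hx, rfl⟩, rfl⟩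
    exact ⟨x, hx, key x hx⟩

theorem ofReal_mem_numericalRange_of_zero_mem_of_one_mem {T : E →ₗ[ℂ] E}
    (h0 : (0 : ℂ) ∈ numericalRange T) (h1 : (1 : ℂ) ∈ numericalRange T) {s : ℝ}
    (hs : s ∈ Set.Icc (0 : ℝ) 1) : (s : ℂ) ∈ numericalRange T := by
  obtain ⟨x, hx, hqx⟩ := h0
  obtain ⟨y, hy, hqy⟩ := h1
  obtain ⟨μ, hμ, hw⟩ := Complex.exists_ne_zero_im_conj_mul_add_mul_eq_zero ⟪x, T y⟫_ℂ ⟪y, T x⟫_ℂ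
  set w := conj μ * ⟪x, T y⟫_ℂ + μ * ⟪y, T x⟫_ℂ
  -- `μ` makes the cross term `w` real, so `T` has a real quadratic form along the path `z`
  let z : ℝ → E := fun t => (((1 - t : ℝ) : ℂ) * μ) • x + (t : ℂ) • y
  have hq : ∀ t : ℝ, ⟪z t, T (z t)⟫_ℂ = ((t ^ 2 + t * (1 - t) * w.re : ℝ) : ℂ) := by
    intro t
    have hwre : (w.re : ℂ) = w := Complex.ext rfl (by simp [hw])
    simp only [z, map_add, map_smul, inner_add_left, inner_add_right, inner_smul_left,
      inner_smul_right, hqx, hqy]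
    push_cast
    rw [hwre]
    simp only [map_mul, Complex.conj_ofReal, map_sub, map_one]
    ring
  have hz : ∀ t, z t ≠ 0 := by
    intro t hzt
    have hty : (t : ℂ) • y = -((((1 - t : ℝ) : ℂ) * μ) • x) := eq_neg_of_add_eq_zero_right hzt
    have hqt := congrArg (fun v => ⟪v, T v⟫_ℂ) hty
    simp only [← neg_smul, inner_smul_map_smul, hqx, hqy] at hqt
    have ht : t = 0 := by simpa using hqt
    subst ht
    apply hμ
    simpa [z, norm_smul, hx] using congrArg norm hzt
  let φ : ℝ → ℝ := fun t => t ^ 2 + t * (1 - t) * w.re - s * ‖z t‖ ^ 2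
  have hφ : (0 : ℝ) ∈ Set.Icc (φ 0) (φ 1) := by
    simp only [φ, z, Complex.ofReal_zero, Complex.ofReal_one, sub_zero, sub_self, one_mul,
      zero_mul, zero_smul, one_smul, add_zero, zero_add, norm_smul, hx, hy]
    constructor <;> nlinarith [hs.1, hs.2, sq_nonneg ‖μ‖]
  obtain ⟨t, -, ht⟩ :=
    intermediate_value_Icc zero_le_one (by fun_prop : Continuous φ).continuousOn hφ
  obtain ⟨u, hu, hqu⟩ := exists_norm_eq_one_inner_map_self_eq T (hz t)
  refine ⟨u, hu, ?_⟩
  have hzt : ((‖z t‖ ^ 2 : ℝ) : ℂ) ≠ 0 := by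
    exact_mod_cast pow_ne_zero 2 (norm_ne_zero_iff.mpr (hz t))
  apply mul_left_cancel₀ hzt
  rw [← hqu, hq t]
  exact_mod_cast (sub_eq_zero.mp ht).trans (mul_comm _ _)

/-- The Toeplitz–Hausdorff theorem. -/
theorem convex_numericalRange (T : E →ₗ[ℂ] E) : Convex ℝ (numericalRange T) := by
  intro p hp p' hp' a b ha hb hab
  rcases eq_or_ne p p' with rfl | hne
  · rwa [← add_smul, hab, one_smul]
  have hd : p' - p ≠ 0 := sub_ne_zero.mpr hne.symm
  -- the affine change `w ↦ (w - p) / (p' - p)` sends `p, p'` to `0, 1`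
  have hW := numericalRange_smul_add_smul_id T (p' - p)⁻¹ (-((p' - p)⁻¹ * p))
  have h0 : (0 : ℂ) ∈ numericalRange ((p' - p)⁻¹ • T + (-((p' - p)⁻¹ * p)) • LinearMap.id) :=
    hW ▸ ⟨p, hp, by ring⟩
  have h1 : (1 : ℂ) ∈ numericalRange ((p' - p)⁻¹ • T + (-((p' - p)⁻¹ * p)) • LinearMap.id) :=
    hW ▸ ⟨p', hp', by field_simp; ring⟩
  obtain ⟨w, hw, hwb⟩ := hW ▸ ofReal_mem_numericalRange_of_zero_mem_of_one_mem h0 h1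
    ⟨hb, by linarith⟩
  convert hw using 1
  field_simp at hwb
  have hab' : (a : ℂ) = 1 - b := by rw [eq_sub_iff_add_eq]; exact_mod_cast hab
  rw [Complex.real_smul, Complex.real_smul, hab']
  linear_combination -hwb

theorem isPositive_neg_iff_of_inner_eq {T : E →ₗ[ℂ] E} {f : E → ℝ}
    (hf : ∀ x, ⟪x, T x⟫_ℂ = f x) :
    (-T).IsPositive ↔ ∀ x, f x ≤ 0 := by
  have h : ∀ x, ⟪(-T) x, x⟫_ℂ = ((-f x : ℝ) : ℂ) := fun x => by
    rw [neg_apply, inner_neg_left, ← inner_conj_symm, hf, Complex.conj_ofReal,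
      Complex.ofReal_neg]
  rw [isPositive_iff_complex]
  refine forall_congr' fun x => ?_
  rw [h]
  simp

/-- The S-lemma. -/
theorem exists_nonneg_forall_add_mul_nonpos {F G : E →ₗ[ℂ] E} {f g : E → ℝ}
    (hF : ∀ x, ⟪x, F x⟫_ℂ = f x) (hG : ∀ x, ⟪x, G x⟫_ℂ = g x) {x₀ : E} (hx₀ : ‖x₀‖ = 1)
    (hgx₀ : 0 < g x₀) (hfg : ∀ x, ‖x‖ = 1 → 0 < g x → f x ≤ 0) :
    ∃ τ : ℝ, 0 ≤ τ ∧ ∀ x, f x + τ * g x ≤ 0 := by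
  -- the joint range of `(f, g)` on the unit sphere is the numerical range of `F + i G`
  set C := F + Complex.I • G
  have hC : ∀ x, ⟪x, C x⟫_ℂ = ⟨f x, g x⟩ := by
    intro x
    apply Complex.ext <;> simp [C, hF, hG]
  obtain ⟨τ, hτ, hW⟩ := (convex_numericalRange C).exists_nonneg_forall_re_add_mul_im_nonpos
    (by rintro _ ⟨x, hx, rfl⟩; rw [hC]; exact hfg x hx) ⟨x₀, hx₀, rfl⟩ (by rw [hC]; exact hgx₀)
  refine ⟨τ, hτ, fun x => ?_⟩
  rcases eq_or_ne x 0 with rfl | hx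
  · have hf0 : f 0 = 0 := by simpa using (hF 0).symm
    have hg0 : g 0 = 0 := by simpa using (hG 0).symm
    simp [hf0, hg0]
  · obtain ⟨u, hu, hxu⟩ := exists_norm_eq_one_inner_map_self_eq C hx
    have hτu := hW _ ⟨u, hu, rfl⟩
    rw [hC, hC] at hxu
    rw [hC] at hτu
    obtain ⟨hf, hg⟩ := Complex.ext_iff.mp hxu
    simp only [Complex.re_ofReal_mul, Complex.im_ofReal_mul] at hf hg hτu
    rw [hf, hg]
    nlinarith [sq_nonneg ‖x‖]

end LinearMap

namespace Matrix

variable {ι : Type*} [Fintype ι] [DecidableEq ι]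

def hermitianPart (A : Matrix ι ι ℂ) : Matrix ι ι ℂ := (2 : ℂ)⁻¹ • (A + Aᴴ)

def skewHermitianPart (A : Matrix ι ι ℂ) : Matrix ι ι ℂ := (2 * Complex.I)⁻¹ • (A - Aᴴ)

variable (A : Matrix ι ι ℂ) (x : EuclideanSpace ℂ ι)

theorem inner_toEuclideanLin_conjTranspose_apply (y : EuclideanSpace ℂ ι) :
    ⟪x, toEuclideanLin Aᴴ y⟫_ℂ = ⟪toEuclideanLin A x, y⟫_ℂ := by
  rw [toEuclideanLin_conjTranspose_eq_adjoint, LinearMap.adjoint_inner_right]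

theorem inner_toEuclideanLin_hermitianPart :
    ⟪x, toEuclideanLin A.hermitianPart x⟫_ℂ = ((⟪x, toEuclideanLin A x⟫_ℂ).re : ℂ) := by
  rw [hermitianPart, map_smul, map_add, LinearMap.smul_apply, LinearMap.add_apply,
    inner_smul_right, inner_add_right, inner_toEuclideanLin_conjTranspose_apply,
    ← inner_conj_symm (toEuclideanLin A x) x, Complex.add_conj]
  push_cast
  ring

theorem inner_toEuclideanLin_skewHermitianPart :
    ⟪x, toEuclideanLin A.skewHermitianPart x⟫_ℂ = ((⟪x, toEuclideanLin A x⟫_ℂ).im : ℂ) := by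
  rw [skewHermitianPart, map_smul, map_sub, LinearMap.smul_apply, LinearMap.sub_apply,
    inner_smul_right, inner_sub_right, inner_toEuclideanLin_conjTranspose_apply,
    ← inner_conj_symm (toEuclideanLin A x) x, Complex.sub_conj]
  push_cast
  field_simp

theorem inner_toEuclideanLin_conjTranspose_mul_self_sub (r : ℝ) :
    ⟪x, toEuclideanLin (Aᴴ * A - ((r : ℂ) ^ 2) • 1) x⟫_ℂ =
      ((‖toEuclideanLin A x‖ ^ 2 - r ^ 2 * ‖x‖ ^ 2 : ℝ) : ℂ) := by
  rw [map_sub, map_smul, toLpLin_mul_same, toLpLin_one, LinearMap.sub_apply, LinearMap.smul_apply,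
    LinearMap.comp_apply, LinearMap.id_apply, inner_sub_right, inner_smul_right,
    inner_toEuclideanLin_conjTranspose_apply, inner_self_eq_norm_sq_to_K,
    inner_self_eq_norm_sq_to_K]
  push_cast
  rfl

theorem inner_toEuclideanLin_skewHermitianPart_sub_smul_hermitianPart (h : ℝ) :
    ⟪x, toEuclideanLin (A.skewHermitianPart - (h : ℂ) • A.hermitianPart) x⟫_ℂ =
      (((⟪x, toEuclideanLin A x⟫_ℂ).im - h * (⟪x, toEuclideanLin A x⟫_ℂ).re : ℝ) : ℂ) := by
  rw [map_sub, map_smul, LinearMap.sub_apply, LinearMap.smul_apply, inner_sub_right,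
    inner_smul_right, inner_toEuclideanLin_skewHermitianPart, inner_toEuclideanLin_hermitianPart]
  push_cast
  rfl

theorem posSemidef_neg_add_smul_iff {F G : Matrix ι ι ℂ} {f g : EuclideanSpace ℂ ι → ℝ}
    (hF : ∀ x, ⟪x, toEuclideanLin F x⟫_ℂ = f x) (hG : ∀ x, ⟪x, toEuclideanLin G x⟫_ℂ = g x)
    (τ : ℝ) : (-(F + (τ : ℂ) • G)).PosSemidef ↔ ∀ x, f x + τ * g x ≤ 0 := by
  rw [← isPositive_toEuclideanLin_iff, map_neg]
  refine LinearMap.isPositive_neg_iff_of_inner_eq fun x => ?_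
  rw [map_add, map_smul, LinearMap.add_apply, LinearMap.smul_apply, inner_add_right,
    inner_smul_right, hF, hG]
  push_cast
  rfl

end Matrix

section Shell

open Matrix

variable {n : ℕ} (A : Matrix (Fin n) (Fin n) ℂ)

theorem isCompact_wShell (r : ℝ) : IsCompact (wShell A r) := by
  have hA : Continuous (toEuclideanLin A) := LinearMap.continuous_of_finiteDimensional _
  have hK : IsCompact {x : EuclideanSpace ℂ (Fin n) | ‖x‖ = 1 ∧ r ≤ ‖toEuclideanLin A x‖} :=
    (isCompact_sphere 0 1).of_isClosed_subset
      ((isClosed_eq continuous_norm continuous_const).inter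
        (isClosed_le continuous_const (continuous_norm.comp hA)))
      fun x hx => mem_sphere_zero_iff_norm.mpr hx.1
  convert hK.image (continuous_id.inner hA) using 1
  ext z
  constructor
  · rintro ⟨x, hx, hrx, rfl⟩
    exact ⟨x, ⟨hx, hrx⟩, rfl⟩
  · rintro ⟨x, ⟨hx, hrx⟩, rfl⟩
    exact ⟨x, hx, hrx, rfl⟩

theorem exists_nonneg_posSemidef_iff {r : ℝ} (hr : 0 ≤ r) {x₀ : EuclideanSpace ℂ (Fin n)}
    (hx₀ : ‖x₀‖ = 1) (hfeas : r < ‖toEuclideanLin A x₀‖) (h : ℝ) :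
    (∃ τ : ℝ, 0 ≤ τ ∧ (-(A.skewHermitianPart - (h : ℂ) • A.hermitianPart +
      (τ : ℂ) • (Aᴴ * A - ((r : ℂ) ^ 2) • 1))).PosSemidef) ↔
      ∀ z ∈ wShell A r, z.im ≤ h * z.re := by
  set L := toEuclideanLin A
  let f : EuclideanSpace ℂ (Fin n) → ℝ := fun x => (⟪x, L x⟫_ℂ).im - h * (⟪x, L x⟫_ℂ).re
  let g : EuclideanSpace ℂ (Fin n) → ℝ := fun x => ‖L x‖ ^ 2 - r ^ 2 * ‖x‖ ^ 2
  have hf : ∀ x, ⟪x, toEuclideanLin (A.skewHermitianPart - (h : ℂ) • A.hermitianPart) x⟫_ℂ = f x :=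
    fun x => inner_toEuclideanLin_skewHermitianPart_sub_smul_hermitianPart A x h
  have hg : ∀ x, ⟪x, toEuclideanLin (Aᴴ * A - ((r : ℂ) ^ 2) • 1) x⟫_ℂ = g x :=
    fun x => inner_toEuclideanLin_conjTranspose_mul_self_sub A x r
  simp_rw [posSemidef_neg_add_smul_iff hf hg]
  constructor
  · rintro ⟨τ, hτ, hfg⟩ _ ⟨x, hx, hrx, rfl⟩
    have hgx : 0 ≤ g x := by
      simp only [g, hx]
      nlinarith [pow_le_pow_left₀ hr hrx 2]
    nlinarith [hfg x, mul_nonneg hτ hgx]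
  · intro hW
    refine LinearMap.exists_nonneg_forall_add_mul_nonpos hf hg hx₀ ?_ fun x hx hgx => ?_
    · simp only [g, hx₀]
      nlinarith [pow_lt_pow_left₀ hfeas hr two_ne_zero]
    · have hrx : r < ‖L x‖ := by
        refine lt_of_pow_lt_pow_left₀ 2 (norm_nonneg _) ?_
        simp only [g, hx] at hgx
        linarith
      simp only [f]
      linarith [hW _ ⟨x, hx, hrx.le, rfl⟩]

end Shell

theorem upper_constrained_phase_sdp_general {n : ℕ}
    (A : Matrix (Fin n) (Fin n) ℂ) (r : ℝ) (hr : 0 ≤ r)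
    (x₀ : EuclideanSpace ℂ (Fin n)) (hx₀ : ‖x₀‖ = 1)
    (hfeas : r < ‖Matrix.toEuclideanLin A x₀‖)
    (hre : ∀ z ∈ wShell A r, 0 < z.re) :
    let Ah : Matrix (Fin n) (Fin n) ℂ := ((2 : ℂ))⁻¹ • (A + Aᴴ)
    let As : Matrix (Fin n) (Fin n) ℂ := ((2 * Complex.I))⁻¹ • (A - Aᴴ)
    let S : Set ℝ := { h | ∃ τ : ℝ, 0 ≤ τ ∧
      (-(As - (h : ℂ) • Ah + (τ : ℂ) • (Aᴴ * A - ((r : ℂ) ^ 2) • 1))).PosSemidef }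
    let T : Set ℝ := { t | ∃ z ∈ wShell A r, t = z.im / z.re }
    S.Nonempty ∧ sSup T ∈ S ∧ sInf S = sSup T := by
  intro Ah As S T
  have hS : S = upperBounds T := by
    ext h
    refine (exists_nonneg_posSemidef_iff A hr hx₀ hfeas h).trans ?_
    constructor
    · rintro hW _ ⟨z, hz, rfl⟩
      exact (div_le_iff₀ (hre z hz)).mpr (hW z hz)
    · exact fun hT z hz => (div_le_iff₀ (hre z hz)).mp (hT ⟨z, hz, rfl⟩)
  have hTne : T.Nonempty := ⟨_, _, ⟨x₀, hx₀, hfeas.le, rfl⟩, rfl⟩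
  have hTbdd : BddAbove T := by
    refine (((isCompact_wShell A r).image_of_continuousOn (Complex.continuous_im.continuousOn.div
      Complex.continuous_re.continuousOn fun z hz => (hre z hz).ne')).bddAbove).mono ?_
    rintro _ ⟨z, hz, rfl⟩
    exact ⟨z, hz, rfl⟩
  rw [hS]
  exact ⟨⟨_, (isLUB_csSup hTne hTbdd).1⟩, (isLUB_csSup hTne hTbdd).1,
    csInf_upperBounds_eq_csSup hTbdd hTne⟩

/-- Upper-phase half of the paper's Proposition 3: `tan ψ̄_r(A)` equals the optimal value
of the SDP minimizing `h` subject to `A_s − h·A_h + τ·(A*A − r²·I) ⪯ 0`, `τ ≥ 0`. -/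
theorem upper_constrained_phase_sdp {n : ℕ} (hn : 1 ≤ n)
    (A : Matrix (Fin n) (Fin n) ℂ) (r : ℝ) (hr : 0 ≤ r)
    (x₀ : EuclideanSpace ℂ (Fin n)) (hx₀ : ‖x₀‖ = 1)
    (hfeas : r < ‖Matrix.toEuclideanLin A x₀‖)
    (hre : ∀ z ∈ wShell A r, 0 < z.re) :
    let Ah : Matrix (Fin n) (Fin n) ℂ := ((2 : ℂ))⁻¹ • (A + Aᴴ)
    let As : Matrix (Fin n) (Fin n) ℂ := ((2 * Complex.I))⁻¹ • (A - Aᴴ)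
    let S : Set ℝ := { h | ∃ τ : ℝ, 0 ≤ τ ∧
      (-(As - (h : ℂ) • Ah + (τ : ℂ) • (Aᴴ * A - ((r : ℂ) ^ 2) • 1))).PosSemidef }
    let T : Set ℝ := { t | ∃ z ∈ wShell A r, t = z.im / z.re }
    S.Nonempty ∧ sSup T ∈ S ∧ sInf S = sSup T :=
  upper_constrained_phase_sdp_general A r hr x₀ hx₀ hfeas hre
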